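/- Let G be a finite simple graph and v a vertex of G. If there exists a vertex w ∈ N(v) with N[w] ⊆ N[v], then φ(G) ≤ φ(G − v) + Σ_{u ∈ N(v)} φ(G − (N[v] ∪ N[u])), where the sum is over all neighbors u of v. -/

import Mathlib

open SimpleGraph Finset

/-- `F` is a dissociation set of `G`: the induced subgraph `G[F]` has maximum degree at most 1,
i.e. every vertex of `F` has at most one neighbor inside `F`. -/
def IsDissocSet {V : Type*} (G : SimpleGraph V) (F : Set V) : Prop :=
  ∀ v ∈ F, ({u ∈ F | G.Adj v u} : Set V).ncard ≤ 1

/-- A maximal dissociation set: a dissociation set not properly contained in any other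
dissociation set. -/
def IsMaximalDissocSet {V : Type*} (G : SimpleGraph V) (F : Set V) : Prop :=
  IsDissocSet G F ∧ ∀ F' : Set V, IsDissocSet G F' → F ⊆ F' → F = F'

/-- `φ(G)`: the number of maximal dissociation sets of `G`. -/
noncomputable def numMaximalDissoc {V : Type*} (G : SimpleGraph V) : ℕ :=
  Set.ncard {F : Set V | IsMaximalDissocSet G F}

/-- `φ(G − S)`: the number of maximal dissociation sets of the subgraph of `G`
induced on the complement of `S`. -/
noncomputable def phiDel {V : Type*} (G : SimpleGraph V) (S : Set V) : ℕ :=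
  numMaximalDissoc (G.induce Sᶜ)

/-!
Since `N[w] ⊆ N[v]`, every maximal dissociation set `F` meets `N(v)`: otherwise the only possible
neighbour of `w` in `F` is `v`, which is then isolated in `G[F]`, so `w` could be added to `F`.
Hence either `v ∉ F`, or `F` contains `v` and exactly one neighbour `u` of `v`, and then
`F ∩ (N[v] ∪ N[u]) = {v, u}`. In both cases the trace of `F` on the deleted set `S` is fixed and
every dissociation set of `G − S` extends by that trace, so `F ↦ F \ S` is an injection into the
maximal dissociation sets of `G − S`.
-/

section

variable {V W : Type*} {G : SimpleGraph V} {F S T : Set V} {u v w x : V}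

theorem isDissocSet_iff_subsingleton [Finite V] :
    IsDissocSet G F ↔ ∀ x ∈ F, {y ∈ F | G.Adj x y}.Subsingleton := by
  simp only [IsDissocSet, Set.ncard_le_one_iff_subsingleton]

theorem IsDissocSet.subsingleton [Finite V] (hF : IsDissocSet G F) (hx : x ∈ F) :
    {y ∈ F | G.Adj x y}.Subsingleton :=
  isDissocSet_iff_subsingleton.1 hF x hx

theorem IsDissocSet.mono [Finite V] {F' : Set V} (hF : IsDissocSet G F) (h : F' ⊆ F) :
    IsDissocSet G F' :=
  isDissocSet_iff_subsingleton.2 fun _ hx =>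
    (hF.subsingleton (h hx)).anti fun _ hy => ⟨h hy.1, hy.2⟩

theorem isDissocSet_pair [Finite V] (a b : V) : IsDissocSet G {a, b} := by
  refine isDissocSet_iff_subsingleton.2 fun _ hx y hy z hz => ?_
  have := hy.2.ne
  have := hz.2.ne
  simp only [Set.mem_insert_iff, Set.mem_singleton_iff, Set.mem_ofPred_eq] at hx hy hz
  grind

theorem IsDissocSet.union [Finite V] (hF : IsDissocSet G F) (hT : IsDissocSet G T)
    (h : ∀ x ∈ F, ∀ y ∈ T, ¬ G.Adj x y) : IsDissocSet G (F ∪ T) := by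
  refine isDissocSet_iff_subsingleton.2 fun x hx => ?_
  rcases hx with hx | hx
  · refine (hF.subsingleton hx).anti fun y ⟨hy, hxy⟩ => ⟨?_, hxy⟩
    exact hy.resolve_right fun hyT => h x hx y hyT hxy
  · refine (hT.subsingleton hx).anti fun y ⟨hy, hxy⟩ => ⟨?_, hxy⟩
    exact hy.resolve_left fun hyF => h y hyF x hx hxy.symm

theorem IsDissocSet.insert_of_forall_adj_isolated [Finite V] (hF : IsDissocSet G F)
    (hw : {u ∈ F | G.Adj w u}.Subsingleton)
    (hiso : ∀ u ∈ F, G.Adj w u → ∀ y ∈ F, ¬ G.Adj u y) : IsDissocSet G (insert w F) := by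
  refine isDissocSet_iff_subsingleton.2 fun x hx => ?_
  rcases hx with rfl | hx
  · exact hw.anti fun y ⟨hy, hxy⟩ => ⟨hy.resolve_left hxy.ne.symm, hxy⟩
  by_cases hxw : G.Adj w x
  · refine (Set.subsingleton_singleton (a := w)).anti fun y ⟨hy, hxy⟩ => ?_
    exact hy.resolve_right fun hyF => hiso x hx hxw y hyF hxy
  · refine (hF.subsingleton hx).anti fun y ⟨hy, hxy⟩ => ⟨?_, hxy⟩
    exact hy.resolve_left fun hyw => hxw (hyw ▸ hxy.symm)

theorem isDissocSet_image_iff [Finite V] [Finite W] {G' : SimpleGraph W} (f : G' ↪g G)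
    (s : Set W) : IsDissocSet G (f '' s) ↔ IsDissocSet G' s := by
  have hnbhd : ∀ x, {y ∈ f '' s | G.Adj (f x) y} = f '' {y ∈ s | G'.Adj x y} := by
    intro x
    ext y
    constructor
    · rintro ⟨⟨z, hz, rfl⟩, hxz⟩
      exact ⟨z, ⟨hz, f.map_adj_iff.1 hxz⟩, rfl⟩
    · rintro ⟨z, ⟨hz, hxz⟩, rfl⟩
      exact ⟨⟨z, hz, rfl⟩, f.map_adj_iff.2 hxz⟩
  simp only [isDissocSet_iff_subsingleton, Set.forall_mem_image, hnbhd,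
    f.injective.subsingleton_image_iff]

theorem IsMaximalDissocSet.isMaximalDissocSet_induce_compl [Finite V]
    (hF : IsMaximalDissocSet G F)
    (hext : ∀ F' ⊆ Sᶜ, IsDissocSet G F' → IsDissocSet G (F' ∪ F ∩ S)) :
    IsMaximalDissocSet (G.induce Sᶜ) (Subtype.val ⁻¹' F) := by
  have himage (s : Set ↥Sᶜ) :
      IsDissocSet (G.induce Sᶜ) s ↔ IsDissocSet G (Subtype.val '' s) :=
    (isDissocSet_image_iff (Embedding.induce Sᶜ) s).symm
  refine ⟨(himage _).2 (hF.1.mono (by simp)), fun F'' hF'' hsub => ?_⟩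
  have hcover : F ⊆ Subtype.val '' F'' ∪ F ∩ S := fun x hx => by
    by_cases hxS : x ∈ S
    · exact Or.inr ⟨hx, hxS⟩
    · exact Or.inl ⟨⟨x, hxS⟩, hsub hx, rfl⟩
  have hF_eq := hF.2 _ (hext _ (by simp) ((himage F'').1 hF'')) hcover
  refine hsub.antisymm fun x hx => ?_
  rw [Set.mem_preimage, hF_eq]
  exact Or.inl ⟨x, hx, rfl⟩

theorem ncard_setOf_isMaximalDissocSet_inter_eq_le [Finite V]
    (hext : ∀ F' ⊆ Sᶜ, IsDissocSet G F' → IsDissocSet G (F' ∪ T)) :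
    {F | IsMaximalDissocSet G F ∧ F ∩ S = T}.ncard ≤ phiDel G S := by
  refine Set.ncard_le_ncard_of_injOn (Subtype.val ⁻¹' ·) ?_ ?_
  · rintro F ⟨hF, rfl⟩
    exact hF.isMaximalDissocSet_induce_compl hext
  · rintro F₁ ⟨-, h₁⟩ F₂ ⟨-, h₂⟩ h
    ext x
    by_cases hxS : x ∈ S
    · rw [← h₂] at h₁
      exact ⟨fun hx => (h₁ ▸ ⟨hx, hxS⟩ : x ∈ F₂ ∩ S).1,
        fun hx => (h₁ ▸ ⟨hx, hxS⟩ : x ∈ F₁ ∩ S).1⟩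
    · exact Set.ext_iff.1 h ⟨x, hxS⟩

theorem IsMaximalDissocSet.exists_adj_mem [Finite V] (hF : IsMaximalDissocSet G F)
    (hw : G.Adj v w) (hsub : insert w (G.neighborSet w) ⊆ insert v (G.neighborSet v)) :
    ∃ u ∈ F, G.Adj v u := by
  by_contra! hisolated
  have hnbhd_w : ∀ u ∈ F, G.Adj w u → u = v := fun u hu hwu =>
    (hsub (Or.inr hwu)).resolve_right (hisolated u hu)
  have hins : IsDissocSet G (insert w F) := by
    refine hF.1.insert_of_forall_adj_isolated
      (Set.subsingleton_singleton.anti fun u hu => hnbhd_w u hu.1 hu.2) fun u hu hwu y hy => ?_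
    exact hnbhd_w u hu hwu ▸ hisolated y hy
  have hwF : w ∈ F := (hF.2 _ hins (Set.subset_insert w F)) ▸ Set.mem_insert w F
  exact hisolated w hwF hw

theorem IsDissocSet.inter_closedNbhd_union_eq_pair [Finite V] (hF : IsDissocSet G F)
    (hv : v ∈ F) (hu : u ∈ F) (hvu : G.Adj v u) :
    F ∩ (insert v (G.neighborSet v) ∪ insert u (G.neighborSet u)) = {v, u} := by
  ext x
  simp only [Set.mem_inter_iff, Set.mem_union, Set.mem_insert_iff, mem_neighborSet,
    Set.mem_singleton_iff]
  constructor
  · rintro ⟨hx, (rfl | hvx) | (rfl | hux)⟩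
    · exact Or.inl rfl
    · exact Or.inr (hF.subsingleton hv ⟨hx, hvx⟩ ⟨hu, hvu⟩)
    · exact Or.inr rfl
    · exact Or.inl (hF.subsingleton hu ⟨hx, hux⟩ ⟨hv, hvu.symm⟩)
  · rintro (rfl | rfl)
    · exact ⟨hv, Or.inl (Or.inl rfl)⟩
    · exact ⟨hu, Or.inr (Or.inl rfl)⟩

theorem IsDissocSet.union_pair [Finite V] {F' : Set V} (hF' : IsDissocSet G F')
    (hdisj : F' ⊆ (insert v (G.neighborSet v) ∪ insert u (G.neighborSet u))ᶜ) :
    IsDissocSet G (F' ∪ {v, u}) := by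
  refine hF'.union (isDissocSet_pair v u) fun x hx y hy hxy => hdisj hx ?_
  rcases hy with rfl | rfl
  · exact Or.inl (Or.inr hxy.symm)
  · exact Or.inr (Or.inr hxy.symm)

end

theorem numMaximalDissoc_le_rec_of_dominated {V : Type*} [Fintype V] (G : SimpleGraph V)
    [DecidableRel G.Adj] (v w : V) (hw : w ∈ G.neighborSet v)
    (hsub : insert w (G.neighborSet w) ⊆ insert v (G.neighborSet v)) :
    numMaximalDissoc G ≤
      phiDel G {v} +
        ∑ u ∈ G.neighborFinset v,
          phiDel G (insert v (G.neighborSet v) ∪ insert u (G.neighborSet u)) := by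
  set N : V → Set V := fun u => insert v (G.neighborSet v) ∪ insert u (G.neighborSet u)
  have hcover : {F | IsMaximalDissocSet G F} ⊆
      {F | IsMaximalDissocSet G F ∧ F ∩ {v} = ∅} ∪
        ⋃ u ∈ G.neighborFinset v, {F | IsMaximalDissocSet G F ∧ F ∩ N u = {v, u}} := by
    intro F hF
    by_cases hv : v ∈ F
    · obtain ⟨u, hu, hvu⟩ := hF.exists_adj_mem hw hsub
      exact Or.inr (Set.mem_biUnion (by simpa using hvu)
        ⟨hF, hF.1.inter_closedNbhd_union_eq_pair hv hu hvu⟩)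
    · exact Or.inl ⟨hF, by simpa using hv⟩
  calc numMaximalDissoc G
      ≤ {F | IsMaximalDissocSet G F ∧ F ∩ {v} = ∅}.ncard +
          ∑ u ∈ G.neighborFinset v, {F | IsMaximalDissocSet G F ∧ F ∩ N u = {v, u}}.ncard :=
        (Set.ncard_le_ncard hcover).trans <| (Set.ncard_union_le _ _).trans <|
          Nat.add_le_add_left (Finset.set_ncard_biUnion_le _ _) _
    _ ≤ _ := by
        refine add_le_add ?_ (Finset.sum_le_sum fun u _ => ?_)
        · exact ncard_setOf_isMaximalDissocSet_inter_eq_le fun F' _ hF' => by simpa using hF'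
        · exact ncard_setOf_isMaximalDissocSet_inter_eq_le fun F' hdisj hF' => hF'.union_pair hdisj
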